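/- Let K ~ PH(α, B)² be the square of a phase-type random variable (with invertible subgenerator B whose eigenvalues have negative real part). Then for u > 0, E[exp(−uK)] = √(π/u) · α' Φ(B/√(2u)) (−B) 1, where Φ(M) := exp(M²/2) N(M) and N is the matrix function obtained by applying the standard normal cumulative distribution function to the matrix argument (via spectral/holomorphic functional calculus). -/

import Mathlib

/-!
The substitution `t = s / √(2u)` turns the weight `e^{-ut²}` into `e^{-s²/2}` and `e^{tB}` into
`e^{sM}` with `M = B / √(2u)`. The functional `E ↦ α' E (-B) 1` is linear in the entries of `E`,
so it commutes with the entrywise integral defining `Φ(M)`. These integrals converge for every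
`B`: the entries of `e^{sM}` grow at most like `e^{s‖M‖}`, which the Gaussian factor dominates.
-/

open Matrix MeasureTheory Real

/-- The matrix function `Φ(M) = exp(M²/2) N(M)`, where `N` is the standard normal CDF applied
to the matrix argument via functional calculus.  For a scalar `b` one has
`e^{b²/2} N(b) = (1/√(2π)) ∫₀^∞ e^{−s²/2} e^{sb} ds`, and this integral representation is the
functional-calculus extension to matrices (agreeing with the spectral definition). -/
noncomputable def matPhi {m : ℕ} (M : Matrix (Fin m) (Fin m) ℝ) : Matrix (Fin m) (Fin m) ℝ :=
  fun i j =>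
    (Real.sqrt (2 * Real.pi))⁻¹ *
      ∫ s in Set.Ioi (0 : ℝ), Real.exp (-s ^ 2 / 2) * (NormedSpace.exp (s • M)) i j

theorem NormedSpace.norm_exp_le_exp_norm {𝔸 : Type*} [NormedRing 𝔸] [NormedAlgebra ℝ 𝔸]
    [NormOneClass 𝔸] (x : 𝔸) : ‖NormedSpace.exp x‖ ≤ Real.exp ‖x‖ := by
  have hterm (n : ℕ) : ‖(n.factorial⁻¹ : ℝ) • x ^ n‖ ≤ ‖x‖ ^ n / n.factorial := by
    rw [norm_smul, norm_inv, Real.norm_natCast, inv_mul_eq_div]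
    gcongr
    exact norm_pow_le x n
  rw [NormedSpace.exp_eq_tsum ℝ, Real.exp_eq_exp_ℝ, NormedSpace.exp_eq_tsum_div]
  exact (norm_tsum_le_tsum_norm (NormedSpace.norm_expSeries_summable' x)).trans <|
    (NormedSpace.norm_expSeries_summable' x).tsum_le_tsum hterm
      (Real.summable_pow_div_factorial ‖x‖)

theorem integrable_exp_neg_mul_sq_add_mul {b : ℝ} (hb : 0 < b) (c : ℝ) :
    Integrable fun s : ℝ => Real.exp (-b * s ^ 2 + c * s) := by
  simpa [Complex.norm_exp, ← Complex.ofReal_pow, Complex.ofReal_re] using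
    (integrable_cexp_quadratic (b := b) (by simpa using hb) c 0).norm

theorem integral_Ioi_exp_neg_mul_sq_mul {u : ℝ} (hu : 0 < u) (f : ℝ → ℝ) :
    ∫ t in Set.Ioi 0, Real.exp (-u * t ^ 2) * f t =
      (Real.sqrt (2 * u))⁻¹ *
        ∫ s in Set.Ioi 0, Real.exp (-s ^ 2 / 2) * f ((Real.sqrt (2 * u))⁻¹ * s) := by
  have hc : 0 < (Real.sqrt (2 * u))⁻¹ := by positivity
  have hsubst (s : ℝ) : -u * ((Real.sqrt (2 * u))⁻¹ * s) ^ 2 = -s ^ 2 / 2 := by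
    rw [mul_pow, inv_pow, Real.sq_sqrt (by positivity)]
    field_simp
  have h := integral_comp_mul_left_Ioi' (fun t => Real.exp (-u * t ^ 2) * f t) 0 hc
  rw [mul_zero, smul_eq_mul] at h
  simp only [hsubst] at h
  exact h.symm

namespace Matrix

variable {n : Type*} [Fintype n]

open scoped Matrix.Norms.Operator in
theorem norm_entry_le_linfty_opNorm {m α : Type*} [Fintype m] [SeminormedAddCommGroup α]
    (A : Matrix m n α) (i : m) (j : n) :
    ‖A i j‖ ≤ ‖A‖ := by
  rw [← coe_nnnorm, ← coe_nnnorm, NNReal.coe_le_coe, linfty_opNNNorm_def]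
  exact (Finset.single_le_sum (fun k _ => zero_le) (Finset.mem_univ j)).trans
    (Finset.le_sup (f := fun i => ∑ k, ‖A i k‖₊) (Finset.mem_univ i))

/- `Matrix` carries no global norm, and a local one would also change the topology in which
`NormedSpace.exp` is summed; the growth rate is therefore stated existentially. -/
theorem exists_norm_exp_smul_apply_le [DecidableEq n] (M : Matrix n n ℝ) :
    ∃ κ, ∀ s : ℝ, 0 ≤ s → ∀ i j, ‖NormedSpace.exp (s • M) i j‖ ≤ Real.exp (κ * s) := by
  open scoped Matrix.Norms.Operator in
  exact ⟨‖M‖, fun s hs i j => by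
    have : Nonempty n := ⟨i⟩ -- for `NormOneClass` of the operator norm
    calc ‖NormedSpace.exp (s • M) i j‖ ≤ ‖NormedSpace.exp (s • M)‖ :=
          norm_entry_le_linfty_opNorm _ i j
      _ ≤ Real.exp ‖s • M‖ := NormedSpace.norm_exp_le_exp_norm _
      _ = Real.exp (‖M‖ * s) := by rw [norm_smul, Real.norm_of_nonneg hs, mul_comm]⟩

theorem integrableOn_exp_neg_sq_div_two_mul_exp_smul_apply [DecidableEq n] (M : Matrix n n ℝ)
    (i j : n) :
    IntegrableOn (fun s : ℝ => Real.exp (-s ^ 2 / 2) * NormedSpace.exp (s • M) i j)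
      (Set.Ioi 0) := by
  obtain ⟨κ, hκ⟩ := M.exists_norm_exp_smul_apply_le
  have hcont : Continuous fun s : ℝ => NormedSpace.exp (s • M) i j := by
    open scoped Matrix.Norms.Operator in
    exact (continuous_apply_apply i j).comp <| continuous_iff_continuousAt.2 fun s =>
      (hasDerivAt_exp_smul_const M s).continuousAt
  refine (integrable_exp_neg_mul_sq_add_mul one_half_pos κ).integrableOn.mono'
    ((Continuous.mul (by fun_prop) hcont).aestronglyMeasurable) ?_
  rw [ae_restrict_iff' measurableSet_Ioi]
  refine ae_of_all _ fun s (hs : 0 < s) => ?_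
  calc ‖Real.exp (-s ^ 2 / 2) * NormedSpace.exp (s • M) i j‖
      ≤ Real.exp (-s ^ 2 / 2) * Real.exp (κ * s) := by
        rw [norm_mul, Real.norm_of_nonneg (Real.exp_pos _).le]
        gcongr
        exact hκ s hs.le i j
    _ = Real.exp (-(1 / 2) * s ^ 2 + κ * s) := by
        rw [← Real.exp_add]
        ring_nf

theorem integral_dotProduct_mulVec {X : Type*} [MeasurableSpace X] {μ : Measure X}
    {m : Type*} [Fintype m] (F : X → Matrix n m ℝ) (hF : ∀ i j, Integrable (fun x => F x i j) μ)
    (a : n → ℝ) (w : m → ℝ) :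
    ∫ x, a ⬝ᵥ F x *ᵥ w ∂μ = a ⬝ᵥ of (fun i j => ∫ x, F x i j ∂μ) *ᵥ w := by
  simp only [dotProduct, mulVec, of_apply, Finset.mul_sum]
  rw [integral_finsetSum _ fun i _ => integrable_finsetSum _ fun j _ =>
    ((hF i j).mul_const _).const_mul _]
  refine Finset.sum_congr rfl fun i _ => ?_
  rw [integral_finsetSum _ fun j _ => ((hF i j).mul_const _).const_mul _]
  simp only [integral_mul_const, integral_const_mul]

end Matrix

theorem laplace_transform_square_phaseType_general
    {m : ℕ} (B : Matrix (Fin m) (Fin m) ℝ) (α : Fin m → ℝ)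
    (u : ℝ) (hu : 0 < u) :
    ∫ t in Set.Ioi (0 : ℝ),
        Real.exp (-u * t ^ 2) * (-(α ⬝ᵥ (NormedSpace.exp (t • B) * B) *ᵥ fun _ => 1))
      = Real.sqrt (Real.pi / u) *
          (α ⬝ᵥ (matPhi ((Real.sqrt (2 * u))⁻¹ • B) * (-B)) *ᵥ fun _ => 1) := by
  have hconst :
      Real.sqrt (Real.pi / u) * (Real.sqrt (2 * Real.pi))⁻¹ = (Real.sqrt (2 * u))⁻¹ := by
    rw [← Real.sqrt_inv, ← Real.sqrt_inv, ← Real.sqrt_mul (by positivity)]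
    congr 1
    field_simp
  rw [integral_Ioi_exp_neg_mul_sq_mul hu]
  set c := (Real.sqrt (2 * u))⁻¹
  have hintegrand (s : ℝ) :
      Real.exp (-s ^ 2 / 2) * (-(α ⬝ᵥ (NormedSpace.exp ((c * s) • B) * B) *ᵥ fun _ => 1))
        = α ⬝ᵥ (Real.exp (-s ^ 2 / 2) • NormedSpace.exp (s • c • B)) *ᵥ (-B *ᵥ fun _ => 1) := by
    rw [mul_comm c s, mul_smul]
    simp only [← mulVec_mulVec, neg_mulVec, mulVec_neg, smul_mulVec, dotProduct_neg,
      dotProduct_smul, smul_eq_mul, mul_neg]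
  have hmatPhi : matPhi (c • B) = (Real.sqrt (2 * Real.pi))⁻¹ • of fun i j =>
      ∫ s in Set.Ioi (0 : ℝ), Real.exp (-s ^ 2 / 2) * NormedSpace.exp (s • c • B) i j := rfl
  simp only [hintegrand]
  rw [Matrix.integral_dotProduct_mulVec _ fun i j => by
    simp only [Matrix.smul_apply, smul_eq_mul]
    exact (c • B).integrableOn_exp_neg_sq_div_two_mul_exp_smul_apply i j]
  rw [hmatPhi, ← mulVec_mulVec, smul_mulVec, dotProduct_smul, smul_eq_mul, ← mul_assoc, hconst]
  simp only [Matrix.smul_apply, smul_eq_mul]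

/-- Let `K = X²` where `X ~ PH(α, B)` (density `f(t) = −α' e^{tB} B 1` on
`(0,∞)`, `B` invertible subgenerator with eigenvalues of negative real part, `α'·1 = 1`).
Then for `u > 0`,
`E[exp(−uK)] = √(π/u) · α' Φ(B/√(2u)) (−B) 1` with `Φ(M) = exp(M²/2) N(M)` as above. -/
theorem laplace_transform_square_phaseType
    {m : ℕ} (B : Matrix (Fin m) (Fin m) ℝ) (α : Fin m → ℝ)
    (hBoff : ∀ i j, i ≠ j → 0 ≤ B i j)
    (hBrow : ∀ i, ∑ j, B i j ≤ 0)
    (hBeig : ∀ (lam : ℂ) (x : Fin m → ℂ), x ≠ 0 →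
        (B.map Complex.ofReal).mulVec x = lam • x → lam.re < 0)
    (hα : ∀ i, 0 ≤ α i) (hα1 : ∑ i, α i = 1)
    (u : ℝ) (hu : 0 < u) :
    ∫ t in Set.Ioi (0 : ℝ),
        Real.exp (-u * t ^ 2) * (-(α ⬝ᵥ (NormedSpace.exp (t • B) * B) *ᵥ fun _ => 1))
      = Real.sqrt (Real.pi / u) *
          (α ⬝ᵥ (matPhi ((Real.sqrt (2 * u))⁻¹ • B) * (-B)) *ᵥ fun _ => 1) :=
  laplace_transform_square_phaseType_general B α u hu
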